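/- arXiv:2510.19287 — 2 statements merged into one kernel-verified Lean document; each statement's English description precedes it below -/
import Mathlib

section
/- Let s ∈ {0,1} and κ ∈ ℂ. Let σ : ℝ → ℂ be twice differentiable and y : ℝ → ℂ be three times differentiable. Define the quasi-derivatives y⁽⁰⁾ = y, y⁽¹⁾ = y' + (s+κ)σy, y⁽²⁾ = (y⁽¹⁾)' + (3κ²/2 + s²/2 + 2κs)σ²y − 2κσy⁽¹⁾, y⁽³⁾ = (y⁽²⁾)' − κ(κ²−s²)σ³y + (3κ²/2 + s²/2 − 2κs)σ²y⁽¹⁾ − (s−κ)σy⁽²⁾. Then for every x ∈ ℝ, y⁽³⁾(x) = y'''(x) + 2s·σ'(x)·y'(x) + (s+κ)·σ''(x)·y(x); equivalently, y⁽³⁾ = y''' + s(σ'y)' + sσ'y' + κσ''y. -/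
/-!
Substituting `y⁽¹⁾` into `y⁽²⁾` collapses it to `y'' + (s+κ)σ'y + (s-κ)σy' + ((s²-κ²)/2)σ²y`.
Differentiating this closed form and substituting into `y⁽³⁾`, the coefficients of `σy''`,
`σσ'y`, `σ²y'` and `σ³y` cancel identically in `s` and `κ`.
-/

/-- The first quasi-derivative: y⁽¹⁾ = y' + (s+κ)σy. -/
noncomputable def qd1 (s κ : ℂ) (σ y : ℝ → ℂ) : ℝ → ℂ :=
  fun x => deriv y x + (s + κ) * σ x * y x

/-- The second quasi-derivative:
y⁽²⁾ = (y⁽¹⁾)' + (3κ²/2 + s²/2 + 2κs)σ²y − 2κσy⁽¹⁾. -/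
noncomputable def qd2 (s κ : ℂ) (σ y : ℝ → ℂ) : ℝ → ℂ :=
  fun x => deriv (qd1 s κ σ y) x
    + (3 * κ ^ 2 / 2 + s ^ 2 / 2 + 2 * κ * s) * σ x ^ 2 * y x
    - 2 * κ * σ x * qd1 s κ σ y x

/-- The third quasi-derivative:
y⁽³⁾ = (y⁽²⁾)' − κ(κ²−s²)σ³y + (3κ²/2 + s²/2 − 2κs)σ²y⁽¹⁾ − (s−κ)σy⁽²⁾. -/
noncomputable def qd3 (s κ : ℂ) (σ y : ℝ → ℂ) : ℝ → ℂ :=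
  fun x => deriv (qd2 s κ σ y) x
    - κ * (κ ^ 2 - s ^ 2) * σ x ^ 3 * y x
    + (3 * κ ^ 2 / 2 + s ^ 2 / 2 - 2 * κ * s) * σ x ^ 2 * qd1 s κ σ y x
    - (s - κ) * σ x * qd2 s κ σ y x

section QuasiDerivatives

variable {s κ : ℂ} {σ y : ℝ → ℂ} {x : ℝ}

theorem hasDerivAt_qd1 (hσ : DifferentiableAt ℝ σ x) (hy : DifferentiableAt ℝ y x)
    (hy' : DifferentiableAt ℝ (deriv y) x) :
    HasDerivAt (qd1 s κ σ y)
      (deriv (deriv y) x + (s + κ) * (deriv σ x * y x + σ x * deriv y x)) x :=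
  (hy'.hasDerivAt.add ((hσ.hasDerivAt.const_mul (s + κ)).mul hy.hasDerivAt)).congr_deriv
    (by ring)

theorem qd2_apply (hσ : DifferentiableAt ℝ σ x) (hy : DifferentiableAt ℝ y x)
    (hy' : DifferentiableAt ℝ (deriv y) x) :
    qd2 s κ σ y x = deriv (deriv y) x + (s + κ) * deriv σ x * y x
      + (s - κ) * σ x * deriv y x + (s ^ 2 - κ ^ 2) / 2 * σ x ^ 2 * y x := by
  simp only [qd2, (hasDerivAt_qd1 hσ hy hy').deriv, qd1]
  ring

theorem hasDerivAt_qd2 (hσ : Differentiable ℝ σ) (hy : Differentiable ℝ y)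
    (hy' : Differentiable ℝ (deriv y)) (hσ' : DifferentiableAt ℝ (deriv σ) x)
    (hy'' : DifferentiableAt ℝ (deriv (deriv y)) x) :
    HasDerivAt (qd2 s κ σ y)
      (deriv (deriv (deriv y)) x
        + (s + κ) * (deriv (deriv σ) x * y x + deriv σ x * deriv y x)
        + (s - κ) * (deriv σ x * deriv y x + σ x * deriv (deriv y) x)
        + (s ^ 2 - κ ^ 2) / 2 * (2 * σ x * deriv σ x * y x + σ x ^ 2 * deriv y x)) x := by
  have hσx := (hσ x).hasDerivAt
  have hyx := (hy x).hasDerivAt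
  rw [show qd2 s κ σ y = _ from funext fun t => qd2_apply (hσ t) (hy t) (hy' t)]
  exact ((((hy''.hasDerivAt.add ((hσ'.hasDerivAt.const_mul (s + κ)).mul hyx)).add
    ((hσx.const_mul (s - κ)).mul (hy' x).hasDerivAt)).add
    (((hσx.pow 2).const_mul ((s ^ 2 - κ ^ 2) / 2)).mul hyx))).congr_deriv
      (by simp only [Nat.cast_ofNat, Nat.add_one_sub_one, pow_one, Pi.pow_apply]; ring)

end QuasiDerivatives

theorem quasi_deriv_third_order_general (s : ℂ) (κ : ℂ) (σ y : ℝ → ℂ)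
    (hσ1 : Differentiable ℝ σ) (hσ2 : Differentiable ℝ (deriv σ))
    (hy1 : Differentiable ℝ y) (hy2 : Differentiable ℝ (deriv y))
    (hy3 : Differentiable ℝ (deriv (deriv y))) :
    ∀ x : ℝ, qd3 s κ σ y x =
      deriv (deriv (deriv y)) x + 2 * s * deriv σ x * deriv y x
        + (s + κ) * deriv (deriv σ) x * y x := by
  intro x
  simp only [qd3, (hasDerivAt_qd2 hσ1 hy1 hy2 (hσ2 x) (hy3 x)).deriv,
    qd2_apply (hσ1 x) (hy1 x) (hy2 x), qd1]
  ring

/-- For s ∈ {0,1}, κ ∈ ℂ, σ twice differentiable and y three times differentiable,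
the third quasi-derivative reproduces the differential expression
ℓ_{σ,s,κ}(y) = y''' + s(σ'y)' + sσ'y' + κσ''y = y''' + 2sσ'y' + (s+κ)σ''y. -/
theorem quasi_deriv_third_order (s : ℂ) (hs : s = 0 ∨ s = 1) (κ : ℂ) (σ y : ℝ → ℂ)
    (hσ1 : Differentiable ℝ σ) (hσ2 : Differentiable ℝ (deriv σ))
    (hy1 : Differentiable ℝ y) (hy2 : Differentiable ℝ (deriv y))
    (hy3 : Differentiable ℝ (deriv (deriv y))) :
    ∀ x : ℝ, qd3 s κ σ y x =
      deriv (deriv (deriv y)) x + 2 * s * deriv σ x * deriv y x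
        + (s + κ) * deriv (deriv σ) x * y x :=
  quasi_deriv_third_order_general s κ σ y hσ1 hσ2 hy1 hy2 hy3
end

section
/- Let s, κ ∈ ℂ. Let σ : ℝ → ℂ be twice continuously differentiable, y : ℝ → ℂ be three times continuously differentiable, and z : ℝ → ℂ be infinitely differentiable with compact support. Then ∫_ℝ (y'''(x) + s(σ'y)'(x) + s·σ'(x)y'(x) + κ·σ''(x)y(x))·z(x) dx = ∫_ℝ ( −y''(x)z'(x) + (κ+s)σ(x)y(x)z''(x) + 2κσ(x)y'(x)z'(x) + (κ−s)σ(x)y''(x)z(x) ) dx. -/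
open MeasureTheory
open scoped ContDiff

private lemma integ_aux {f g : ℝ → ℂ} (hf : Continuous f) (hg : Continuous g)
    (hgc : HasCompactSupport g) : Integrable (fun x => f x * g x) :=
  (hf.mul hg).integrable_of_hasCompactSupport hgc.mul_left

private lemma ibp_aux {f g : ℝ → ℂ} (hf : ContDiff ℝ 1 f) (hg : ContDiff ℝ 1 g)
    (hgc : HasCompactSupport g) :
    ∫ x : ℝ, deriv f x * g x = -∫ x : ℝ, f x * deriv g x := by
  have hfd : ∀ x, HasDerivAt f (deriv f x) x := fun x => (hf.differentiable one_ne_zero x).hasDerivAt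
  have hgd : ∀ x, HasDerivAt g (deriv g x) x := fun x => (hg.differentiable one_ne_zero x).hasDerivAt
  have i1 : Integrable (f * deriv g) :=
    integ_aux hf.continuous (hg.continuous_deriv le_rfl) hgc.deriv
  have i2 : Integrable (deriv f * g) :=
    integ_aux (hf.continuous_deriv le_rfl) hg.continuous hgc
  have i3 : Integrable (f * g) := integ_aux hf.continuous hg.continuous hgc
  have h := integral_mul_deriv_eq_deriv_mul_of_integrable (fun x _ => hfd x) (fun x _ => hgd x) i1 i2 i3
  rw [h, neg_neg]


private lemma integral_add4 {f1 f2 f3 f4 : ℝ → ℂ} (h1 : Integrable f1) (h2 : Integrable f2)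
    (h3 : Integrable f3) (h4 : Integrable f4) :
    ∫ x : ℝ, (f1 x + f2 x + f3 x + f4 x)
      = (∫ x : ℝ, f1 x) + (∫ x : ℝ, f2 x) + (∫ x : ℝ, f3 x) + (∫ x : ℝ, f4 x) := by
  have h12 := integral_add h1 h2
  have h123 := integral_add (h1.add h2) h3
  have h1234 := integral_add ((h1.add h2).add h3) h4
  simp only [Pi.add_apply] at h123 h1234
  rw [h1234, h123, h12]

private lemma two_le_inf : (2 : WithTop ℕ∞) ≤ ∞ := by
  rw [show (2 : WithTop ℕ∞) = ((2:ℕ∞) : WithTop ℕ∞) from rfl]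
  exact WithTop.coe_le_coe.mpr le_top

private lemma one_le_inf : (1 : WithTop ℕ∞) ≤ ∞ := by
  rw [show (1 : WithTop ℕ∞) = ((1:ℕ∞) : WithTop ℕ∞) from rfl]
  exact WithTop.coe_le_coe.mpr le_top

/-- Integration-by-parts identity: for σ ∈ C², y ∈ C³ and a test function
z ∈ C₀^∞(ℝ), the action of ℓ_{σ,s,κ}(y) = y''' + s(σ'y)' + sσ'y' + κσ''y on z
equals ∫ (−y''z' + (κ+s)σyz'' + 2κσy'z' + (κ−s)σy''z). -/
theorem integration_by_parts_identity (s κ : ℂ) (σ y z : ℝ → ℂ)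
    (hσ : ContDiff ℝ 2 σ) (hy : ContDiff ℝ 3 y)
    (hz : ContDiff ℝ (⊤ : ℕ∞) z) (hzc : HasCompactSupport z) :
    ∫ x : ℝ,
        (deriv (deriv (deriv y)) x + s * deriv (fun t => deriv σ t * y t) x
          + s * deriv σ x * deriv y x + κ * deriv (deriv σ) x * y x) * z x
    = ∫ x : ℝ,
        (-(deriv (deriv y) x) * deriv z x
          + (κ + s) * σ x * y x * deriv (deriv z) x
          + 2 * κ * σ x * deriv y x * deriv z x
          + (κ - s) * σ x * deriv (deriv y) x * z x) := by
  -- smoothness bookkeeping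
  have hσ2 : ContDiff ℝ (1 + 1) σ := by exact_mod_cast hσ
  have hσ1 : ContDiff ℝ 1 σ := hσ2.of_le (by norm_num)
  have hσ'1 : ContDiff ℝ 1 (deriv σ) := (contDiff_succ_iff_deriv.mp hσ2).2.2
  have hy3 : ContDiff ℝ (2 + 1) y := by exact_mod_cast hy
  have hy2 : ContDiff ℝ 2 (deriv y) := by
    exact_mod_cast (contDiff_succ_iff_deriv.mp hy3).2.2
  have hy'2 : ContDiff ℝ (1 + 1) (deriv y) := by exact_mod_cast hy2
  have hy1 : ContDiff ℝ 1 y := hy3.of_le (by norm_num)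
  have hy'1 : ContDiff ℝ 1 (deriv y) := hy'2.of_le (by norm_num)
  have hy''1 : ContDiff ℝ 1 (deriv (deriv y)) := (contDiff_succ_iff_deriv.mp hy'2).2.2
  have hzi : ContDiff ℝ ∞ z := hz.of_le (by simp)
  have hz'i : ContDiff ℝ ∞ (deriv z) := (contDiff_infty_iff_deriv.mp hzi).2
  have hz''i : ContDiff ℝ ∞ (deriv (deriv z)) := (contDiff_infty_iff_deriv.mp hz'i).2
  have hz1 : ContDiff ℝ 1 z := hzi.of_le one_le_inf
  have hz'1 : ContDiff ℝ 1 (deriv z) := hz'i.of_le one_le_inf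
  have hz''1 : ContDiff ℝ 1 (deriv (deriv z)) := hz''i.of_le one_le_inf
  -- continuity
  have cσ : Continuous σ := hσ1.continuous
  have cσ' : Continuous (deriv σ) := hσ'1.continuous
  have cσ'' : Continuous (deriv (deriv σ)) := hσ'1.continuous_deriv le_rfl
  have cy : Continuous y := hy1.continuous
  have cy' : Continuous (deriv y) := hy'1.continuous
  have cy'' : Continuous (deriv (deriv y)) := hy''1.continuous
  have cy''' : Continuous (deriv (deriv (deriv y))) := hy''1.continuous_deriv le_rfl
  have cz : Continuous z := hz1.continuous
  have cz' : Continuous (deriv z) := hz'1.continuous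
  have cz'' : Continuous (deriv (deriv z)) := hz''1.continuous
  -- compact supports
  have hzc' : HasCompactSupport (deriv z) := hzc.deriv
  have hzc'' : HasCompactSupport (deriv (deriv z)) := hzc'.deriv
  -- differentiability
  have dy : Differentiable ℝ y := hy1.differentiable one_ne_zero
  have dy' : Differentiable ℝ (deriv y) := hy'1.differentiable one_ne_zero
  have dz : Differentiable ℝ z := hz1.differentiable one_ne_zero
  have dz' : Differentiable ℝ (deriv z) := hz'1.differentiable one_ne_zero
  -- the four atomic integrals
  set I0 := ∫ x : ℝ, deriv (deriv y) x * deriv z x with hI0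
  set I1 := ∫ x : ℝ, σ x * (deriv (deriv y) x * z x) with hI1
  set I2 := ∫ x : ℝ, σ x * (deriv y x * deriv z x) with hI2
  set I3 := ∫ x : ℝ, σ x * (y x * deriv (deriv z) x) with hI3
  -- integrability of atoms
  have j1 : Integrable (fun x => σ x * (deriv (deriv y) x * z x)) :=
    integ_aux cσ (cy''.mul cz) hzc.mul_left
  have j2 : Integrable (fun x => σ x * (deriv y x * deriv z x)) :=
    integ_aux cσ (cy'.mul cz') hzc'.mul_left
  have j3 : Integrable (fun x => σ x * (y x * deriv (deriv z) x)) :=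
    integ_aux cσ (cy.mul cz'') hzc''.mul_left
  -- e1 : ∫ y''' z = -I0
  have e1 : ∫ x : ℝ, deriv (deriv (deriv y)) x * z x = -I0 := ibp_aux hy''1 hz1 hzc
  -- e2 : ∫ (σ'y)' z = I2 + I3
  have e2 : ∫ x : ℝ, deriv (fun t => deriv σ t * y t) x * z x = I2 + I3 := by
    rw [ibp_aux (hσ'1.mul hy1) hz1 hzc]
    have h1 : (fun x => (fun t => deriv σ t * y t) x * deriv z x)
        = fun x => deriv σ x * (y x * deriv z x) := by
      funext x; ring
    rw [h1, show (∫ x : ℝ, deriv σ x * (y x * deriv z x))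
        = -∫ x : ℝ, σ x * deriv (fun t => y t * deriv z t) x from
      ibp_aux hσ1 (hy1.mul hz'1) hzc'.mul_left, neg_neg]
    have h2 : (fun x => σ x * deriv (fun t => y t * deriv z t) x)
        = fun x => σ x * (deriv y x * deriv z x) + σ x * (y x * deriv (deriv z) x) := by
      funext x
      rw [deriv_fun_mul (dy x) (dz' x)]
      ring
    rw [h2, integral_add j2 j3]
  -- e3 : ∫ σ' (y' z) = -(I1 + I2)
  have e3 : ∫ x : ℝ, deriv σ x * (deriv y x * z x) = -(I1 + I2) := by
    rw [show (∫ x : ℝ, deriv σ x * (deriv y x * z x))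
        = -∫ x : ℝ, σ x * deriv (fun t => deriv y t * z t) x from
      ibp_aux hσ1 (hy'1.mul hz1) hzc.mul_left]
    have h2 : (fun x => σ x * deriv (fun t => deriv y t * z t) x)
        = fun x => σ x * (deriv (deriv y) x * z x) + σ x * (deriv y x * deriv z x) := by
      funext x
      rw [deriv_fun_mul (dy' x) (dz x)]
      ring
    rw [h2, integral_add j1 j2]
  -- e4 : ∫ σ'' (y z) = I1 + 2 I2 + I3
  have e4 : ∫ x : ℝ, deriv (deriv σ) x * (y x * z x) = I1 + 2 * I2 + I3 := by
    rw [show (∫ x : ℝ, deriv (deriv σ) x * (y x * z x))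
        = -∫ x : ℝ, deriv σ x * deriv (fun t => y t * z t) x from
      ibp_aux hσ'1 (hy1.mul hz1) hzc.mul_left]
    have hyz : ContDiff ℝ (1 + 1) (fun t => y t * z t) :=
      (hy3.of_le (by norm_num)).mul (hzi.of_le two_le_inf)
    have hyz' : ContDiff ℝ 1 (deriv (fun t => y t * z t)) :=
      (contDiff_succ_iff_deriv.mp hyz).2.2
    have hyzc : HasCompactSupport (fun t => y t * z t) := hzc.mul_left
    rw [show (∫ x : ℝ, deriv σ x * deriv (fun t => y t * z t) x)
        = -∫ x : ℝ, σ x * deriv (deriv (fun t => y t * z t)) x from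
      ibp_aux hσ1 hyz' hyzc.deriv, neg_neg]
    have hd1 : deriv (fun t => y t * z t) = fun t => deriv y t * z t + y t * deriv z t := by
      funext t; rw [deriv_fun_mul (dy t) (dz t)]
    have h2 : (fun x => σ x * deriv (deriv (fun t => y t * z t)) x)
        = fun x => σ x * (deriv (deriv y) x * z x)
            + σ x * (deriv y x * deriv z x) + σ x * (deriv y x * deriv z x)
            + σ x * (y x * deriv (deriv z) x) := by
      funext x
      rw [hd1, deriv_fun_add (f := fun t => deriv y t * z t) (g := fun t => y t * deriv z t) ((dy'.differentiableAt).mul (dz.differentiableAt))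
        ((dy.differentiableAt).mul (dz'.differentiableAt)),
        deriv_fun_mul (dy' x) (dz x), deriv_fun_mul (dy x) (dz' x)]
      ring
    rw [h2, integral_add4 j1 j2 j2 j3]
    ring
  -- split the left-hand side
  have ia : Integrable (fun x => deriv (deriv (deriv y)) x * z x) :=
    integ_aux cy''' cz hzc
  have ib : Integrable (fun x => deriv (fun t => deriv σ t * y t) x * z x) :=
    integ_aux ((hσ'1.mul hy1).continuous_deriv le_rfl) cz hzc
  have ic : Integrable (fun x => deriv σ x * (deriv y x * z x)) :=
    integ_aux cσ' (cy'.mul cz) hzc.mul_left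
  have id' : Integrable (fun x => deriv (deriv σ) x * (y x * z x)) :=
    integ_aux cσ'' (cy.mul cz) hzc.mul_left
  have hsplitL : (fun x : ℝ =>
      (deriv (deriv (deriv y)) x + s * deriv (fun t => deriv σ t * y t) x
        + s * deriv σ x * deriv y x + κ * deriv (deriv σ) x * y x) * z x)
      = fun x => deriv (deriv (deriv y)) x * z x
          + s * (deriv (fun t => deriv σ t * y t) x * z x)
          + s * (deriv σ x * (deriv y x * z x))
          + κ * (deriv (deriv σ) x * (y x * z x)) := by
    funext x; ring
  -- split the right-hand side
  have ka : Integrable (fun x => deriv (deriv y) x * deriv z x) :=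
    integ_aux cy'' cz' hzc'
  have hsplitR : (fun x : ℝ =>
      -(deriv (deriv y) x) * deriv z x
        + (κ + s) * σ x * y x * deriv (deriv z) x
        + 2 * κ * σ x * deriv y x * deriv z x
        + (κ - s) * σ x * deriv (deriv y) x * z x)
      = fun x => (-1 : ℂ) * (deriv (deriv y) x * deriv z x)
          + (κ + s) * (σ x * (y x * deriv (deriv z) x))
          + (2 * κ) * (σ x * (deriv y x * deriv z x))
          + (κ - s) * (σ x * (deriv (deriv y) x * z x)) := by
    funext x; ring
  have ib' : Integrable (fun x => s * (deriv (fun t => deriv σ t * y t) x * z x)) :=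
    ib.const_mul s
  have ic' : Integrable (fun x => s * (deriv σ x * (deriv y x * z x))) := ic.const_mul s
  have id'' : Integrable (fun x => κ * (deriv (deriv σ) x * (y x * z x))) := id'.const_mul κ
  have ka' : Integrable (fun x => (-1 : ℂ) * (deriv (deriv y) x * deriv z x)) :=
    ka.const_mul (-1)
  have j3' : Integrable (fun x => (κ + s) * (σ x * (y x * deriv (deriv z) x))) :=
    j3.const_mul (κ + s)
  have j2' : Integrable (fun x => (2 * κ) * (σ x * (deriv y x * deriv z x))) :=
    j2.const_mul (2 * κ)
  have j1' : Integrable (fun x => (κ - s) * (σ x * (deriv (deriv y) x * z x))) :=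
    j1.const_mul (κ - s)
  rw [hsplitL, hsplitR, integral_add4 ia ib' ic' id'', integral_add4 ka' j3' j2' j1',
    integral_const_mul s, integral_const_mul s, integral_const_mul κ,
    integral_const_mul (-1 : ℂ), integral_const_mul (κ + s), integral_const_mul (2 * κ),
    integral_const_mul (κ - s), e1, e2, e3, e4]
  ring
end
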